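/- arXiv:1911.11527 — 5 statements merged into one kernel-verified Lean document; each statement's English description precedes it below -/
import Mathlib

section
/- Let F : A → B and G : B → C be functors, and suppose F is an M(G)-fibration, where M(G) is the class of morphisms g of B with G g a monomorphism. Then any morphism f : A → A' of A such that both F f and G F f are monomorphisms factors as f = g ∘ k where g is a monomorphism in A and F k is an identity morphism. -/
open CategoryTheory

universe v₁ v₂ v₃ u₁ u₂ u₃

variable {A : Type u₁} {B : Type u₂} {C : Type u₃}
variable [Category.{v₁} A] [Category.{v₂} B] [Category.{v₃} C]

/-- A morphism `f` of `A` is cartesian with respect to `F` over `F.map f`. -/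
def IsCartesian (F : A ⥤ B) {X Y : A} (f : X ⟶ Y) : Prop :=
  ∀ ⦃Z : A⦄ (g : Z ⟶ Y) (h : F.obj Z ⟶ F.obj X),
    h ≫ F.map f = F.map g → ∃! k : Z ⟶ X, F.map k = h ∧ k ≫ f = g

/-- `F` is a fibration relative to a class `M` of morphisms of `B`. -/
def IsMFibration (F : A ⥤ B) (M : MorphismProperty B) : Prop :=
  ∀ (A₀ : A) (B₀ : B) (f' : B₀ ⟶ F.obj A₀), M f' →
    ∃ (A' : A) (f : A' ⟶ A₀) (e : F.obj A' = B₀),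
      F.map f = eqToHom e ≫ f' ∧ IsCartesian F f

/-! A cartesian lift `g` of `F.map f` exists because `G.map (F.map f)` is mono, and `f` factors
through it by a morphism lying over an identity. Cartesianness reduces cancelling `g` to
cancelling `F.map g ≅ F.map f`, so `g` is mono. -/

namespace IsCartesian

variable {F : A ⥤ B} {X Y : A} {g : X ⟶ Y}

lemma eq_of_map_eq_of_comp_eq (hg : IsCartesian F g) {Z : A} {u v : Z ⟶ X}
    (hF : F.map u = F.map v) (hcomp : u ≫ g = v ≫ g) : u = v := by
  obtain ⟨w, -, hw⟩ := hg (u ≫ g) (F.map u) (F.map_comp u g).symm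
  exact (hw u ⟨rfl, rfl⟩).trans (hw v ⟨hF.symm, hcomp.symm⟩).symm

lemma mono_of_mono_map (hg : IsCartesian F g) [Mono (F.map g)] : Mono g :=
  ⟨fun u v huv => hg.eq_of_map_eq_of_comp_eq
    ((cancel_mono (F.map g)).1 (by simp only [← F.map_comp, huv])) huv⟩

end IsCartesian

/-- If `F` is an `M(G)`-fibration, then every morphism `f` with `F.map f` and `G.map (F.map f)`
monomorphisms factors as `f = k ≫ g` with `g` a monomorphism and `F.map k` an identity. -/
theorem factorization_of_mono (F : A ⥤ B) (G : B ⥤ C)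
    (hfib : IsMFibration F (fun _ _ g => Mono (G.map g)))
    {A₀ A' : A} (f : A₀ ⟶ A') (h1 : Mono (F.map f)) (h2 : Mono (G.map (F.map f))) :
    ∃ (E : A) (g : E ⟶ A') (k : A₀ ⟶ E) (e : F.obj A₀ = F.obj E),
      Mono g ∧ f = k ≫ g ∧ F.map k = eqToHom e := by
  obtain ⟨E, g, e, hg, hcart⟩ := hfib A' (F.obj A₀) (F.map f) h2
  have : Mono (F.map g) := hg ▸ mono_comp _ _
  obtain ⟨k, ⟨hFk, hkg⟩, -⟩ := hcart f (eqToHom e.symm) (by simp [hg])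
  exact ⟨E, g, k, e.symm, hcart.mono_of_mono_map, hkg.symm, hFk⟩
end

section
/- Let ν : F → G and τ : G → F be natural transformations between functors F, G : A → B with τ ∘ ν = id_F. Then F preserves every colimit that G preserves. -/
open CategoryTheory Limits

universe w w' v₁ v₂ u₁ u₂

variable {A : Type u₁} {B : Type u₂} [Category.{v₁} A] [Category.{v₂} B]

/-- If `F` is a natural retract of `G` (there are natural transformations `ν : F ⟶ G` and
`τ : G ⟶ F` with `ν ≫ τ = 𝟙 F`), then `F` preserves every colimit that `G` preserves. -/
theorem preserves_colimit_of_natural_retract {F G : A ⥤ B} (ν : F ⟶ G) (τ : G ⟶ F)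
    (h : ν ≫ τ = 𝟙 F) {J : Type w} [Category.{w'} J] (K : J ⥤ A) (c : Cocone K)
    (hc : IsColimit c) (hGc : IsColimit (G.mapCocone c)) :
    Nonempty (IsColimit (F.mapCocone c)) := by
  have hντ : ∀ X, ν.app X ≫ τ.app X = 𝟙 (F.obj X) := fun X => congrArg (·.app X) h
  refine ⟨{
    desc := fun s => ν.app c.pt ≫ hGc.desc ((Cocone.precompose (Functor.whiskerLeft K τ)).obj s)
    fac := fun s j => ?_
    uniq := fun s m hm => ?_ }⟩
  · have hnat := ν.naturality (c.ι.app j)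
    have hfac := hGc.fac ((Cocone.precompose (Functor.whiskerLeft K τ)).obj s) j
    dsimp at hnat hfac ⊢
    rw [← Category.assoc, hnat, Category.assoc, hfac, ← Category.assoc, hντ,
      Category.id_comp]
  · have key : τ.app c.pt ≫ m = hGc.desc ((Cocone.precompose (Functor.whiskerLeft K τ)).obj s) := by
      refine hGc.uniq ((Cocone.precompose (Functor.whiskerLeft K τ)).obj s) (τ.app c.pt ≫ m) fun j => ?_
      have hnat := τ.naturality (c.ι.app j)
      have := hm j
      dsimp at hnat this ⊢
      rw [← Category.assoc, hnat, Category.assoc, this]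
    dsimp
    rw [← key, ← Category.assoc, hντ, Category.id_comp]
end

section
/- Let F, G : A → B be functors, P : ⟨F|G⟩ → A the forgetful functor of the inserter category. Let f : (A,a) → (C,c) and g : (B,b) → (C,c) be morphisms in ⟨F|G⟩ and h : A → B a morphism in A with P f = P g ∘ h. If G(P g) is a monomorphism, then there exists a unique morphism h' : (A,a) → (B,b) in ⟨F|G⟩ with P h' = h and f = g ∘ h'. -/
open CategoryTheory

universe v₁ v₂ v₃ u₁ u₂ u₃

variable {A : Type u₁} {B : Type u₂} [Category.{v₁} A] [Category.{v₂} B]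

/-- The inserter category `⟨F|G⟩` of two functors `F G : A ⥤ B`: objects are pairs
`(A, α : F A ⟶ G A)`. -/
structure Inserter (F G : A ⥤ B) where
  obj : A
  hom : F.obj obj ⟶ G.obj obj

namespace Inserter

variable {F G : A ⥤ B}

instance : Category (Inserter F G) where
  Hom X Y := { u : X.obj ⟶ Y.obj // X.hom ≫ G.map u = F.map u ≫ Y.hom }
  id X := ⟨𝟙 X.obj, by simp⟩
  comp {X Y Z} u v := ⟨u.1 ≫ v.1, by
    rw [F.map_comp, G.map_comp, ← Category.assoc, u.2, Category.assoc, v.2, ← Category.assoc]⟩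
  id_comp u := Subtype.ext (Category.id_comp u.1)
  comp_id u := Subtype.ext (Category.comp_id u.1)
  assoc u v w := Subtype.ext (Category.assoc u.1 v.1 w.1)

/-- The forgetful functor `P : ⟨F|G⟩ ⥤ A`. -/
def P (F G : A ⥤ B) : Inserter F G ⥤ A where
  obj X := X.obj
  map u := u.1
  map_id _ := rfl
  map_comp _ _ := rfl

end Inserter

namespace Inserter

variable {F G : A ⥤ B}

instance : (P F G).Faithful where
  map_injective := Subtype.ext

theorem hom_comm_of_fac_of_mono {X Y Z : Inserter F G} (f : X ⟶ Z) (g : Y ⟶ Z)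
    (h : X.obj ⟶ Y.obj) (hfg : f.1 = h ≫ g.1) [Mono (G.map g.1)] :
    X.hom ≫ G.map h = F.map h ≫ Y.hom := by
  rw [← cancel_mono (G.map g.1)]
  calc (X.hom ≫ G.map h) ≫ G.map g.1
        = X.hom ≫ G.map f.1 := by rw [hfg, G.map_comp, Category.assoc]
    _ = F.map f.1 ≫ Z.hom := f.2
    _ = F.map h ≫ F.map g.1 ≫ Z.hom := by rw [hfg, F.map_comp, Category.assoc]
    _ = (F.map h ≫ Y.hom) ≫ G.map g.1 := by rw [← g.2, Category.assoc]

end Inserter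

/-- Given morphisms `f : (A,a) ⟶ (C,c)` and `g : (B,b) ⟶ (C,c)` in the inserter category and
a morphism `h : A ⟶ B` in `A` with `P f = P g ∘ h`, if `G (P g)` is a monomorphism then there
is a unique morphism `h' : (A,a) ⟶ (B,b)` with `P h' = h` and `f = g ≫ h'`. -/
theorem inserter_lift_of_mono {F G : A ⥤ B} {X Y Z : Inserter F G}
    (f : X ⟶ Z) (g : Y ⟶ Z) (h : X.obj ⟶ Y.obj)
    (hfg : f.1 = h ≫ g.1) (hmono : Mono (G.map g.1)) :
    ∃! h' : X ⟶ Y, h'.1 = h ∧ f = h' ≫ g := by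
  refine ⟨⟨h, Inserter.hom_comm_of_fac_of_mono f g h hfg⟩, ⟨rfl, Subtype.ext hfg⟩, ?_⟩
  rintro h' ⟨rfl, -⟩
  exact (Inserter.P F G).map_injective rfl
end

section
/- Let F : A → A be an endofunctor and ε : F → Id a natural transformation on a category A with coequalizers. Let S(ε) : A → ⟨F|Id⟩ be the functor A ↦ (A, ε A), and let U(ε) : ⟨F|Id⟩ → A be defined objectwise by the coequalizer of the pair (α, ε A) for each (A, α), with projection π(ε) : P → U(ε) where P is the forgetful functor. Then π(ε) S(ε) is a natural isomorphism, and U(ε) is left adjoint to S(ε), with unit η(ε) : Id → S(ε) U(ε) determined by P η(ε) = π(ε) and counit the inverse of π(ε) S(ε). -/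
open CategoryTheory

universe v₁ v₂ v₃ u₁ u₂ u₃

variable {A : Type u₁} {B : Type u₂} [Category.{v₁} A] [Category.{v₂} B]

open Limits

variable (F : A ⥤ A) (ε : F ⟶ 𝟭 A)

/-- The functor `S(ε) : A ⥤ ⟨F|Id⟩`, `A ↦ (A, ε A)`. -/
def insS : A ⥤ Inserter F (𝟭 A) where
  obj X := ⟨X, ε.app X⟩
  map {X Y} f := ⟨f, (ε.naturality f).symm⟩
  map_id _ := rfl
  map_comp _ _ := rfl

/-- Let `A` have coequalizers, `F : A ⥤ A` an endofunctor and `ε : F ⟶ Id` a natural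
transformation. Suppose `U : ⟨F|Id⟩ ⥤ A` is equipped with a natural transformation
`π : P ⟶ U` whose component at each object `(A, α)` is a coequalizer of the pair `(α, ε A)`.
Then `π S(ε)` is invertible (componentwise), and `U` is left adjoint to `S(ε)` via an
adjunction whose unit `η(ε)` satisfies `P η(ε) = π` and whose counit is the inverse of
`π S(ε)`. -/
theorem insU_adjunction [HasCoequalizers A]
    (U : Inserter F (𝟭 A) ⥤ A) (π : Inserter.P F (𝟭 A) ⟶ U)
    (w : ∀ X : Inserter F (𝟭 A), X.hom ≫ π.app X = ε.app X.obj ≫ π.app X)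
    (hπ : ∀ X : Inserter F (𝟭 A), Nonempty (IsColimit (Cofork.ofπ (π.app X) (w X)))) :
    (∀ A₀ : A, IsIso (π.app ((insS F ε).obj A₀))) ∧
    ∃ adj : U ⊣ insS F ε,
      (∀ X : Inserter F (𝟭 A), (adj.unit.app X).1 = π.app X) ∧
      (∀ A₀ : A,
        π.app ((insS F ε).obj A₀) ≫ adj.counit.app A₀ = 𝟙 A₀ ∧
        adj.counit.app A₀ ≫ π.app ((insS F ε).obj A₀) = 𝟙 (U.obj ((insS F ε).obj A₀))) := by
  classical
  have hc : ∀ X : Inserter F (𝟭 A), IsColimit (Cofork.ofπ (π.app X) (w X)) :=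
    fun X => (hπ X).some
  have hdesc : ∀ (X : Inserter F (𝟭 A)) (Z : A) (k : X.obj ⟶ Z)
      (h : X.hom ≫ k = ε.app X.obj ≫ k),
      π.app X ≫ Cofork.IsColimit.desc (hc X) k h = k := fun X Z k h => by
    exact Cofork.IsColimit.π_desc (hc X)
  have hext : ∀ (X : Inserter F (𝟭 A)) (Z : A) (f g : U.obj X ⟶ Z),
      π.app X ≫ f = π.app X ≫ g → f = g := fun X Z f g h =>
    Cofork.IsColimit.hom_ext (hc X) h
  let e : ∀ (X : Inserter F (𝟭 A)) (Y : A), (U.obj X ⟶ Y) ≃ (X ⟶ (insS F ε).obj Y) :=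
    fun X Y =>
    { toFun := fun g => ⟨π.app X ≫ g, by
        dsimp [insS]
        exact ((Category.assoc _ _ _).symm.trans ((w X) =≫ g)).trans
          ((Category.assoc _ _ _).trans (ε.naturality (π.app X ≫ g)).symm)⟩
      invFun := fun u => Cofork.IsColimit.desc (hc X) u.1 (by
        have h2 := u.2
        dsimp [insS] at h2
        exact h2.trans (ε.naturality u.1))
      left_inv := fun g => hext X Y _ _ (hdesc X Y _ _)
      right_inv := fun u => Subtype.ext (hdesc X Y u.1 _) }
  have he1 : ∀ (X : Inserter F (𝟭 A)) (Y : A) (g : U.obj X ⟶ Y),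
      ((e X Y) g).1 = π.app X ≫ g := fun _ _ _ => rfl
  have he2 : ∀ (X : Inserter F (𝟭 A)) (Y : A) (u : X ⟶ (insS F ε).obj Y),
      π.app X ≫ (e X Y).symm u = u.1 := fun X Y u => hdesc X Y u.1 _
  let core : Adjunction.CoreHomEquiv U (insS F ε) :=
    { homEquiv := e
      homEquiv_naturality_left_symm := by
        intro X X' Y f g
        refine hext X Y _ _ ?_
        rw [he2, ← Category.assoc, ← π.naturality, Category.assoc, he2]
        rfl
      homEquiv_naturality_right := by
        intro X Y Y' g f
        apply Subtype.ext
        show π.app X ≫ g ≫ f = (π.app X ≫ g) ≫ f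
        rw [Category.assoc] }
  let adj : U ⊣ insS F ε := Adjunction.mkOfHomEquiv core
  have hcounit : ∀ A₀ : A, adj.counit.app A₀ = (e ((insS F ε).obj A₀) A₀).symm (𝟙 _) :=
    fun A₀ => by simp [adj, core]
  have h1 : ∀ A₀ : A, π.app ((insS F ε).obj A₀) ≫ adj.counit.app A₀ = 𝟙 A₀ := by
    intro A₀
    rw [hcounit]
    exact he2 _ _ (𝟙 _)
  have h2 : ∀ A₀ : A,
      adj.counit.app A₀ ≫ π.app ((insS F ε).obj A₀) = 𝟙 (U.obj ((insS F ε).obj A₀)) := by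
    intro A₀
    refine hext _ _ _ _ ?_
    refine ((Category.assoc _ _ _).symm.trans ((h1 A₀) =≫ _)).trans ?_
    exact (Category.id_comp _).trans (Category.comp_id _).symm
  constructor
  · exact fun A₀ => ⟨adj.counit.app A₀, h1 A₀, h2 A₀⟩
  · refine ⟨adj, ?_, fun A₀ => ⟨h1 A₀, h2 A₀⟩⟩
    intro X
    have hu : adj.unit.app X = e X (U.obj X) (𝟙 _) := by simp [adj, core]
    rw [hu, he1, Category.comp_id]
end

section
/- Let A be an object of a braided (or just monoidal) category M with coequalizers preserved by tensor products, and consider morphisms e : A → A and f : A → A' in M such that A ⊗ f and f ⊗ A are epimorphisms and f ∘ e ∘ e = f ∘ e. Then the functor X ↦ X ⊗ X preserves the coequalizer of the pair (f ∘ e, f): if p : A' → V is the coequalizer of (f∘e, f), then p ⊗ p : A' ⊗ A' → V ⊗ V is the coequalizer of (f∘e ⊗ f∘e, f ⊗ f). -/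
open CategoryTheory Limits MonoidalCategory

universe v u

/-- In a monoidal category with coequalizers, in which tensoring on either side preserves
coequalizers, given `e : A ⟶ A` and `f : A ⟶ A'` with `A ⊗ f` and `f ⊗ A` epimorphisms and
`f ∘ e ∘ e = f ∘ e`, the functor `X ↦ X ⊗ X` preserves the coequalizer of the pair
`(f ∘ e, f)`: if `p : A' ⟶ V` is a coequalizer of `(e ≫ f, f)`, then `p ⊗ p` is a
coequalizer of `((e ≫ f) ⊗ (e ≫ f), f ⊗ f)`. -/
theorem tensor_square_preserves_coequalizer
    {M : Type u} [Category.{v} M] [MonoidalCategory M] [HasCoequalizers M]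
    [∀ X : M, PreservesColimitsOfShape WalkingParallelPair (tensorLeft X)]
    [∀ X : M, PreservesColimitsOfShape WalkingParallelPair (tensorRight X)]
    {A A' V : M} (e : A ⟶ A) (f : A ⟶ A')
    (hepi1 : Epi (A ◁ f)) (hepi2 : Epi (f ▷ A))
    (hee : e ≫ e ≫ f = e ≫ f)
    (p : A' ⟶ V) (w : (e ≫ f) ≫ p = f ≫ p)
    (hp : IsColimit (Cofork.ofπ p w)) :
    Nonempty (IsColimit (Cofork.ofπ (p ⊗ₘ p)
      (show ((e ≫ f) ⊗ₘ (e ≫ f)) ≫ (p ⊗ₘ p) = (f ⊗ₘ f) ≫ (p ⊗ₘ p) by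
        rw [tensorHom_comp_tensorHom, tensorHom_comp_tensorHom, w]))) := by
  -- coequalizer colimits obtained by whiskering
  have hL : IsColimit (Cofork.ofπ (A' ◁ p)
      (by simp only [← MonoidalCategory.whiskerLeft_comp, w]) :
      Cofork (A' ◁ (e ≫ f)) (A' ◁ f)) :=
    isColimitCoforkMapOfIsColimit (tensorLeft A') w hp
  have hR : IsColimit (Cofork.ofπ (p ▷ V)
      (by simp only [← comp_whiskerRight, w]) :
      Cofork ((e ≫ f) ▷ V) (f ▷ V)) :=
    isColimitCoforkMapOfIsColimit (tensorRight V) w hp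
  have hAL : IsColimit (Cofork.ofπ (A ◁ p)
      (by simp only [← MonoidalCategory.whiskerLeft_comp, w]) :
      Cofork (A ◁ (e ≫ f)) (A ◁ f)) :=
    isColimitCoforkMapOfIsColimit (tensorLeft A) w hp
  have epiL : Epi (A' ◁ p) := ⟨fun a b h => Cofork.IsColimit.hom_ext hL h⟩
  have epiR : Epi (p ▷ V) := ⟨fun a b h => Cofork.IsColimit.hom_ext hR h⟩
  have epiAL : Epi (A ◁ p) := ⟨fun a b h => Cofork.IsColimit.hom_ext hAL h⟩
  refine ⟨Cofork.IsColimit.mk' _ fun s => ?_⟩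
  have hq : ((e ≫ f) ⊗ₘ (e ≫ f)) ≫ s.π = (f ⊗ₘ f) ≫ s.π := s.condition
  -- step 1 : (ef ⊗ f) ≫ q = (f ⊗ f) ≫ q
  have h1 : ((e ≫ f) ⊗ₘ f) ≫ s.π = (f ⊗ₘ f) ≫ s.π := by
    have := congrArg (fun t => (e ⊗ₘ (𝟙 A)) ≫ t) hq
    simp only [← Category.assoc, tensorHom_comp_tensorHom, Category.comp_id, Category.id_comp,
      hee] at this
    rw [← this, hq]
  -- step 2 : (f ⊗ ef) ≫ q = (f ⊗ f) ≫ q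
  have h2 : (f ⊗ₘ (e ≫ f)) ≫ s.π = (f ⊗ₘ f) ≫ s.π := by
    have := congrArg (fun t => ((𝟙 A) ⊗ₘ e) ≫ t) hq
    simp only [← Category.assoc, tensorHom_comp_tensorHom, Category.comp_id, Category.id_comp,
      hee] at this
    rw [← this, hq]
  -- step 3
  have h3 : A' ◁ (e ≫ f) ≫ s.π = A' ◁ f ≫ s.π := by
    rw [← cancel_epi (f ▷ A), ← Category.assoc, ← Category.assoc, ← MonoidalCategory.tensorHom_def,
      ← MonoidalCategory.tensorHom_def]
    exact h2
  set t := Cofork.IsColimit.desc hL s.π h3 with ht_def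
  have ht : A' ◁ p ≫ t = s.π := Cofork.IsColimit.π_desc' hL s.π h3
  -- step 4 : (ef ▷ A') ≫ q = (f ▷ A') ≫ q
  have h4 : (e ≫ f) ▷ A' ≫ s.π = f ▷ A' ≫ s.π := by
    rw [← cancel_epi (A ◁ f), ← Category.assoc, ← Category.assoc, ← tensorHom_def',
      ← tensorHom_def']
    exact h1
  -- step 5 : (ef ▷ V) ≫ t = (f ▷ V) ≫ t
  have h5 : (e ≫ f) ▷ V ≫ t = f ▷ V ≫ t := by
    rw [← cancel_epi (A ◁ p)]
    calc A ◁ p ≫ (e ≫ f) ▷ V ≫ t = (e ≫ f) ▷ A' ≫ A' ◁ p ≫ t := by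
          simp only [← Category.assoc, whisker_exchange]
      _ = (e ≫ f) ▷ A' ≫ s.π := by rw [ht]
      _ = f ▷ A' ≫ s.π := h4
      _ = f ▷ A' ≫ A' ◁ p ≫ t := by rw [ht]
      _ = A ◁ p ≫ f ▷ V ≫ t := by simp only [← Category.assoc, whisker_exchange]
  set u := Cofork.IsColimit.desc hR t h5 with hu_def
  have hu : p ▷ V ≫ u = t := Cofork.IsColimit.π_desc' hR t h5
  have epiP : Epi (p ⊗ₘ p) := by
    rw [tensorHom_def']
    exact epi_comp _ _
  have fac : (p ⊗ₘ p) ≫ u = s.π := by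
    rw [tensorHom_def' p p, Category.assoc, hu, ht]
  refine ⟨u, fac, ?_⟩
  intro m hm
  rw [← cancel_epi (p ⊗ₘ p), fac]
  exact hm
end
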